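/- arXiv:2501.03175 — 3 statements merged into one kernel-verified Lean document; each statement's English description precedes it below -/
import Mathlib

section
/- Let f: {0,1}^n → {0,1}^n be a Boolean network whose state transition graph consists of a single fixed point together with transient states all feeding into it via one path visiting every configuration (Hamiltonian of maximum height: there is z with z, f(z), ..., f^{2^n−1}(z) all distinct and f^{2^n−1}(z) a fixed point). Then the interaction graph G(f) is strongly connected. -/
/-!
Let `S` be the set of vertices from which `j` is reachable. No arc enters `S`, so the
coordinates in `S` evolve autonomously under a subnetwork `g`, and the orbit of `z` projects to a
`g`-orbit. If some `i` lay outside `S`, every configuration `v` of `S` would be the projection of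
two distinct states `x` and `flipBit x i`, both visited by the Hamiltonian orbit; so the `g`-orbit
would return to `v` and be periodic from there on. Since it also ends in a fixed point, `v` would
be that fixed point, for every `v`: absurd, as `S ∋ j` is nonempty.
-/

def flipBit {n : ℕ} (x : Fin n → Bool) (i : Fin n) : Fin n → Bool :=
  Function.update x i (!(x i))

/-- Arc `(i,j)` of the interaction graph: `f_j` depends on `x_i`. -/
def Dep {n : ℕ} (f : (Fin n → Bool) → (Fin n → Bool)) (i j : Fin n) : Prop :=
  ∃ x : Fin n → Bool, f x j ≠ f (flipBit x i) j

open Function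

namespace BooleanNetwork

variable {n : ℕ}

lemma flipBit_ne (x : Fin n → Bool) (i : Fin n) : flipBit x i ≠ x := fun h => by
  simpa [flipBit] using congrFun h i

lemma flipBit_eq_of_ne {x : Fin n → Bool} {i k : Fin n} (h : k ≠ i) : flipBit x i k = x k :=
  update_of_ne h _ _

lemma apply_eq_of_forall_not_dep {f : (Fin n → Bool) → (Fin n → Bool)} {j : Fin n}
    {D : Finset (Fin n)} (hD : ∀ i ∈ D, ¬ Dep f i j) {x x' : Fin n → Bool}
    (hxx' : ∀ i ∉ D, x i = x' i) : f x j = f x' j := by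
  classical
  induction D using Finset.induction generalizing x with
  | empty => rw [funext fun i => hxx' i (Finset.notMem_empty i)]
  | @insert a D ha ih =>
    set x'' := update x a (x' a)
    have hx'' : f x j = f x'' j := by
      by_cases hxa : x' a = x a
      · rw [show x'' = x by simp [x'', hxa]]
      · have hflip : x'' = flipBit x a := by
          change update x a (x' a) = update x a (!x a)
          rw [Bool.eq_not_of_ne hxa]
        rw [hflip]
        exact not_not.mp fun h => hD a (Finset.mem_insert_self a D) ⟨x, h⟩
    rw [hx'']
    refine ih (fun i hi => hD i (Finset.mem_insert_of_mem hi)) fun i hi => ?_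
    by_cases hia : i = a
    · subst hia; simp [x'']
    · simpa [x'', hia] using hxx' i (by simp [hia, hi])

variable (S : Finset (Fin n))

def proj (x : Fin n → Bool) : S → Bool := fun i => x i

def extend (v : S → Bool) : Fin n → Bool := fun k => if h : k ∈ S then v ⟨k, h⟩ else false

@[simp] lemma proj_extend (v : S → Bool) : proj S (extend S v) = v := by
  funext i; simp [proj, extend]

lemma proj_flipBit_of_notMem {i : Fin n} (hi : i ∉ S) (x : Fin n → Bool) :
    proj S (flipBit x i) = proj S x :=
  funext fun k => flipBit_eq_of_ne fun h => hi (h ▸ k.2)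

def subnetwork (f : (Fin n → Bool) → (Fin n → Bool)) : (S → Bool) → (S → Bool) :=
  fun v => proj S (f (extend S v))

variable {S}

lemma semiconj_proj_subnetwork {f : (Fin n → Bool) → (Fin n → Bool)}
    (hS : ∀ i ∉ S, ∀ j ∈ S, ¬ Dep f i j) : Semiconj (proj S) f (subnetwork S f) := by
  classical
  intro x
  funext j
  refine apply_eq_of_forall_not_dep (D := Sᶜ) (fun i hi => hS i (Finset.mem_compl.mp hi) j j.2)
    fun i hi => ?_
  have hiS : i ∈ S := by simpa using hi
  simp [extend, proj, hiS]

end BooleanNetwork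

/-- The orbit is periodic from `g^[a] x` on and eventually constant. -/
lemma Function.iterate_eq_of_iterate_eq_of_isFixedPt {α : Type*} {g : α → α} {x : α}
    {a b N : ℕ} (hab : a < b) (hrep : g^[a] x = g^[b] x) (hN : IsFixedPt g (g^[N] x)) :
    g^[a] x = g^[N] x := by
  have hper : IsPeriodicPt g (b - a) (g^[a] x) := by
    rw [IsPeriodicPt, IsFixedPt, ← iterate_add_apply, Nat.sub_add_cancel hab.le, hrep]
  have hlarge : N ≤ (b - a) * N + a := le_add_right (Nat.le_mul_of_pos_left N (by omega))
  calc g^[a] x = g^[(b - a) * N] (g^[a] x) := (hper.mul_const N).symm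
    _ = g^[(b - a) * N + a - N] (g^[N] x) := by
      rw [← iterate_add_apply, ← iterate_add_apply, Nat.sub_add_cancel hlarge]
    _ = g^[N] x := (hN.iterate _).eq

lemma Function.exists_iterate_eq_of_iterate_injOn {α : Type*} [Fintype α] {f : α → α} {z : α}
    (hinj : ∀ a b, a < Fintype.card α → b < Fintype.card α → f^[a] z = f^[b] z → a = b)
    (x : α) : ∃ k, f^[k] z = x := by
  have hbij : Bijective fun k : Fin (Fintype.card α) => f^[k] z :=
    (Fintype.bijective_iff_injective_and_card _).mpr
      ⟨fun a b h => Fin.ext (hinj a b a.2 b.2 h), Fintype.card_fin _⟩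
  obtain ⟨k, hk⟩ := hbij.2 x
  exact ⟨k, hk⟩

namespace BooleanNetwork

lemma eq_univ_of_forall_not_dep {f : (Fin n → Bool) → (Fin n → Bool)} {z : Fin n → Bool}
    (hcover : ∀ x, ∃ k, f^[k] z = x) {N : ℕ} (hfix : IsFixedPt f (f^[N] z))
    {S : Finset (Fin n)} (hne : S.Nonempty) (hS : ∀ i ∉ S, ∀ j ∈ S, ¬ Dep f i j) :
    S = Finset.univ := by
  refine Finset.eq_univ_iff_forall.mpr fun i => ?_
  by_contra hi
  set g := subnetwork S f
  have horbit : ∀ k, proj S (f^[k] z) = g^[k] (proj S z) := fun k =>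
    ((semiconj_proj_subnetwork hS).iterate_right k) z
  have hgfix : IsFixedPt g (g^[N] (proj S z)) := by
    rw [← horbit]
    exact (semiconj_proj_subnetwork hS (f^[N] z)).symm.trans (congrArg _ hfix)
  have : Nonempty S := hne.to_subtype
  obtain ⟨v, hv⟩ := exists_ne (g^[N] (proj S z))
  obtain ⟨a, ha⟩ := hcover (extend S v)
  obtain ⟨b, hb⟩ := hcover (flipBit (extend S v) i)
  have hav : g^[a] (proj S z) = v := by rw [← horbit, ha, proj_extend]
  have hbv : g^[b] (proj S z) = v := by
    rw [← horbit, hb, proj_flipBit_of_notMem S hi, proj_extend]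
  have hab : a ≠ b := by
    rintro rfl
    exact flipBit_ne _ _ (hb.symm.trans ha)
  rcases hab.lt_or_gt with h | h
  · exact hv (hav ▸ iterate_eq_of_iterate_eq_of_isFixedPt h (hav.trans hbv.symm) hgfix)
  · exact hv (hbv ▸ iterate_eq_of_iterate_eq_of_isFixedPt h (hbv.trans hav.symm) hgfix)

end BooleanNetwork

/-- A Hamiltonian Boolean network of maximum height has a strongly connected
interaction graph. -/
theorem stmt4 {n : ℕ} (f : (Fin n → Bool) → (Fin n → Bool))
    (z : Fin n → Bool)
    (hdist : ∀ a b : ℕ, a < 2 ^ n → b < 2 ^ n → f^[a] z = f^[b] z → a = b)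
    (hfix : f (f^[2 ^ n - 1] z) = f^[2 ^ n - 1] z) :
    ∀ i j : Fin n, Relation.ReflTransGen (Dep f) i j := by
  classical
  intro i j
  have hcover : ∀ x, ∃ k, f^[k] z = x :=
    Function.exists_iterate_eq_of_iterate_injOn (by simpa using hdist)
  let S := Finset.univ.filter fun i => Relation.ReflTransGen (Dep f) i j
  have hS : ∀ k ∉ S, ∀ l ∈ S, ¬ Dep f k l := fun k hk l hl hkl =>
    hk (Finset.mem_filter.mpr ⟨Finset.mem_univ k, .head hkl (Finset.mem_filter.mp hl).2⟩)
  have hSU : S = Finset.univ := BooleanNetwork.eq_univ_of_forall_not_dep hcover hfix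
    ⟨j, Finset.mem_filter.mpr ⟨Finset.mem_univ j, .refl⟩⟩ hS
  exact (Finset.mem_filter.mp (Finset.eq_univ_iff_forall.mp hSU i)).2
end

section
/- Let f: {0,1}^n → {0,1}^n be a Hamiltonian cycle Boolean network (a cyclic permutation of {0,1}^n of order 2^n) and I ⊆ [n] nonempty. Then f is self-dual in I if and only if f^{2^{n−1}}(x) = ¬_I(x) for every x ∈ {0,1}^n. -/
open Function

def negOn {n : ℕ} (I : Finset (Fin n)) (x : Fin n → Bool) : Fin n → Bool :=
  fun k => if k ∈ I then !(x k) else x k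

lemma negOn_involutive {n : ℕ} (I : Finset (Fin n)) : Involutive (negOn I) := by
  intro x
  funext k
  by_cases hk : k ∈ I <;> simp [negOn, hk]

lemma negOn_ne_self {n : ℕ} {I : Finset (Fin n)} (hI : I.Nonempty) (x : Fin n → Bool) :
    negOn I x ≠ x := by
  obtain ⟨i, hi⟩ := hI
  intro h
  simpa [negOn, hi] using congrFun h i

namespace Function

variable {α : Type*} {f g : α → α} {x : α}

lemma Involutive.commute_iff_forall_eq_conj (hg : Involutive g) :
    Function.Commute f g ↔ ∀ x, f x = g (f (g x)) := by
  refine ⟨fun h x => ?_, fun h x => ?_⟩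
  · rw [← h, hg]
  · rw [h (g x), hg]

lemma minimalPeriod_eq_of_isLeast {p : ℕ} (h : IsLeast {k | 0 < k ∧ f^[k] x = x} p) :
    minimalPeriod f x = p :=
  le_antisymm (IsPeriodicPt.minimalPeriod_le h.1.1 h.1.2)
    (h.2 ⟨IsPeriodicPt.minimalPeriod_pos h.1.1 h.1.2, iterate_minimalPeriod⟩)

lemma exists_iterate_eq_of_minimalPeriod_eq_card [Fintype α]
    (h : minimalPeriod f x = Fintype.card α) (y : α) : ∃ k, f^[k] x = y := by
  classical
  have horbit : (Finset.range (minimalPeriod f x)).image (f^[·] x) = Finset.univ := by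
    refine Finset.eq_univ_of_card _ ?_
    rw [Finset.card_image_of_injOn, Finset.card_range, h]
    simpa using iterate_injOn_Iio_minimalPeriod
  obtain ⟨k, -, hk⟩ := Finset.mem_image.1 (horbit ▸ Finset.mem_univ y)
  exact ⟨k, hk⟩

/-- Walking from `x` to `g x` and then, by commutation, from `g x` back to `g (g x) = x` takes
the same number of steps, so `g x` is half a period away from `x`. -/
lemma iterate_minimalPeriod_div_two_eq (hfg : Function.Commute f g) (hg : Involutive g)
    (hgx : g x ≠ x) {k : ℕ} (hk : f^[k] x = g x) : f^[minimalPeriod f x / 2] x = g x := by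
  have hback : ∀ {m}, f^[m] x = g x → IsPeriodicPt f (m + m) x := fun hm => by
    rw [IsPeriodicPt, IsFixedPt, iterate_add_apply, hm, (hfg.iterate_left _).eq, hm, hg]
  have hne : ∀ {m}, f^[m] x = g x → m ≠ 0 := by rintro _ hm rfl; exact hgx.symm hm
  have hpos : 0 < minimalPeriod f x :=
    (hback hk).minimalPeriod_pos (by have := hne hk; omega)
  set r := k % minimalPeriod f x
  have hr : f^[r] x = g x := by rw [iterate_mod_minimalPeriod_eq, hk]
  have hrlt : r < minimalPeriod f x := Nat.mod_lt _ hpos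
  have htwo : r + r = minimalPeriod f x :=
    Nat.eq_of_dvd_of_lt_two_mul (by have := hne hr; omega) (hback hr).minimalPeriod_dvd
      (by omega)
  rwa [show minimalPeriod f x / 2 = r by omega]

end Function

/-- A Hamiltonian cycle Boolean network is self-dual in `I` iff its
`2^(n-1)`-th iterate is the negation on `I`. -/
theorem stmt6 {n : ℕ} (f : (Fin n → Bool) → (Fin n → Bool))
    (hham : ∀ x : Fin n → Bool, IsLeast {k : ℕ | 0 < k ∧ f^[k] x = x} (2 ^ n))
    (I : Finset (Fin n)) (hI : I.Nonempty) :
    (∀ x : Fin n → Bool, f x = negOn I (f (negOn I x))) ↔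
      (∀ x : Fin n → Bool, f^[2 ^ (n - 1)] x = negOn I x) := by
  have hn : 1 ≤ n := hI.choose.pos
  have hperiod : ∀ x, minimalPeriod f x = 2 ^ n := fun x => minimalPeriod_eq_of_isLeast (hham x)
  have hhalf : 2 ^ n / 2 = 2 ^ (n - 1) := by
    rw [← Nat.pow_div hn two_pos, pow_one]
  rw [← (negOn_involutive I).commute_iff_forall_eq_conj]
  constructor
  · intro hcomm x
    obtain ⟨k, hk⟩ := exists_iterate_eq_of_minimalPeriod_eq_card
      ((hperiod x).trans (by simp)) (negOn I x)
    rw [← hhalf, ← hperiod x]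
    exact iterate_minimalPeriod_div_two_eq hcomm (negOn_involutive I) (negOn_ne_self hI x) hk
  · intro h
    exact funext h ▸ (Commute.iterate_self f _).symm
end

section
/- Let f: {0,1}^n → {0,1}^n be a Boolean network with n ≥ 3, and let i, j ∈ [n]. Suppose |T(f_j)| is divisible by 4 and nonempty, and that there exists a ∈ {0,1} such that |{x ∈ T(f_j) : x_i = a}| is odd. Then f_j depends on all n variables. -/
/-! If `f_j` does not depend on `x_k`, then `T(f_j)` is closed under flipping the `k`-th bit, and
this flip pairs the points of any flip-closed set with `x_k = b` with those with `x_k = !b`.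
For `k = i` this gives `|T(f_j)| = 2 |T(f_j, x_i = a)| ≡ 2 mod 4`; for `k ≠ i` the half
`T(f_j, x_i = a)` is itself flip-closed, hence of even cardinality. -/

open Finset

section flipBit

variable {n : ℕ}

@[simp]
theorem flipBit_apply_self (x : Fin n → Bool) (k : Fin n) : flipBit x k k = !x k := by
  simp [flipBit]

theorem flipBit_apply_of_ne (x : Fin n → Bool) {k m : Fin n} (h : m ≠ k) :
    flipBit x k m = x m :=
  Function.update_of_ne h _ _

@[simp]
theorem flipBit_flipBit (x : Fin n → Bool) (k : Fin n) : flipBit (flipBit x k) k = x := by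
  simp [flipBit]

variable {s : Finset (Fin n → Bool)} {k : Fin n}

theorem card_filter_apply_eq_of_flipBit_mem (hs : ∀ x ∈ s, flipBit x k ∈ s) (b : Bool) :
    #(s.filter (· k = b)) = #(s.filter (· k = !b)) := by
  refine card_nbij' (flipBit · k) (flipBit · k) ?_ ?_
    (fun x _ => flipBit_flipBit x k) (fun x _ => flipBit_flipBit x k)
  all_goals
    intro x hx
    simp only [coe_filter, Set.mem_ofPred_eq] at hx ⊢
    simp [hs x hx.1, hx.2]

theorem card_eq_two_mul_card_filter_of_flipBit_mem (hs : ∀ x ∈ s, flipBit x k ∈ s) (b : Bool) :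
    #s = 2 * #(s.filter (· k = b)) := by
  have hcompl : s.filter (¬ · k = b) = s.filter (· k = !b) := by
    refine filter_congr fun x _ => ?_
    cases x k <;> cases b <;> simp
  rw [← card_filter_add_card_filter_not (· k = b), hcompl,
    ← card_filter_apply_eq_of_flipBit_mem hs b, two_mul]

theorem even_card_of_flipBit_mem (hs : ∀ x ∈ s, flipBit x k ∈ s) : Even #s :=
  ⟨_, (card_eq_two_mul_card_filter_of_flipBit_mem hs true).trans (two_mul _)⟩

end flipBit

theorem stmt8_general {n : ℕ} (f : (Fin n → Bool) → (Fin n → Bool))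
    (i j : Fin n)
    (h4 : 4 ∣ (Finset.univ.filter (fun x : Fin n → Bool => f x j = true)).card)
    (hodd : ∃ a : Bool, Odd (Finset.univ.filter
      (fun x : Fin n → Bool => f x j = true ∧ x i = a)).card) :
    ∀ k : Fin n, ∃ x : Fin n → Bool, f x j ≠ f (flipBit x k) j := by
  intro k
  by_contra! hindep
  obtain ⟨a, ha⟩ := hodd
  rw [← filter_filter] at ha
  set T := univ.filter (fun x : Fin n → Bool => f x j = true)
  have hT : ∀ x ∈ T, flipBit x k ∈ T := by simp [T, ← hindep]
  rcases eq_or_ne k i with rfl | hki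
  · rw [card_eq_two_mul_card_filter_of_flipBit_mem hT a] at h4
    obtain ⟨c, hc⟩ := ha
    omega
  · have hTa : ∀ x ∈ T.filter (· i = a), flipBit x k ∈ T.filter (· i = a) := by
      intro x hx
      rw [mem_filter] at hx ⊢
      exact ⟨hT x hx.1, (flipBit_apply_of_ne x hki.symm).trans hx.2⟩
    exact Nat.not_even_iff_odd.2 ha (even_card_of_flipBit_mem hTa)

/-- If `|T(f_j)|` is a nonzero multiple of four and some half
`T(f_j, x_i = a)` has odd cardinality, then `f_j` depends on all variables. -/
theorem stmt8 {n : ℕ} (hn : 3 ≤ n) (f : (Fin n → Bool) → (Fin n → Bool))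
    (i j : Fin n)
    (h4 : 4 ∣ (Finset.univ.filter (fun x : Fin n → Bool => f x j = true)).card)
    (hne : (Finset.univ.filter (fun x : Fin n → Bool => f x j = true)).Nonempty)
    (hodd : ∃ a : Bool, Odd (Finset.univ.filter
      (fun x : Fin n → Bool => f x j = true ∧ x i = a)).card) :
    ∀ k : Fin n, ∃ x : Fin n → Bool, f x j ≠ f (flipBit x k) j :=
  stmt8_general f i j h4 hodd
end
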